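/- (Theorem 1, equivalence of (2) and (3).) Let A ∈ ℝ^{n×n}, C ∈ ℝ^{p×n}, K ∈ ℝ^{r×n}, and let P ∈ ℝ^{n×n} be an orthogonal matrix such that, with block sizes n₁, n₂, n₃ (n₁+n₂+n₃ = n): PᵀAP = [[A₁,0,0],[A₂₁,A₂,0],[A₃₁,A₃₂,A₃]], CP = [C₁,0,0], KP = [K₁,K₂,K₃], where (A₁,C₁) is observable, every complex eigenvalue of A₂ has negative real part, and every complex eigenvalue of A₃ has nonnegative real part. Then the following are equivalent: (i) for every λ ∈ ℂ with Re λ ≥ 0, the rank of the complex matrix obtained by stacking D_{[A,C],n,λ} on top of K equals the rank of D_{[A,C],n,λ}; (ii) K₃ = 0. -/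

import Mathlib

/-!
Conjugating by `P` makes `λ - A` block lower triangular with diagonal blocks `λ - Aᵢ`, so the
kernel of `D_{[A,C],n,λ}` can be read off blockwise. In these coordinates the first component
of a kernel vector is killed by the observability of `(A₁, C₁)` and, for `Re λ ≥ 0`, the second
by the invertibility of `λ - A₂`, while every generalized eigenvector `u` of `A₃` gives the
kernel vector `(0, 0, u)` at an eigenvalue with `Re λ ≥ 0`. The rank condition says that `K`
vanishes on this kernel, and since the generalized eigenvectors of `A₃` span, this is exactly
`K₃ = 0`.
-/

open Matrix

/-- The stacked matrix `D_{[A,C],k,λ}`, obtained by vertically stacking the blocks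
`C, C(λI−A), C(λI−A)², …, C(λI−A)^{k−1}` and `(λI−A)^k`, with real matrices coerced
entrywise into `ℂ`. Rows of the block `C(λI−A)^j` are indexed by `(j, row of C)`. -/
noncomputable def Dstack {n : ℕ} {p : Type*} (k : ℕ) (A : Matrix (Fin n) (Fin n) ℝ)
    (C : Matrix p (Fin n) ℝ) (lam : ℂ) : Matrix ((Fin k × p) ⊕ Fin n) (Fin n) ℂ :=
  Matrix.fromRows
    (Matrix.of fun ki j =>
      ((C.map Complex.ofReal) *
        (lam • (1 : Matrix (Fin n) (Fin n) ℂ) - A.map Complex.ofReal) ^ (ki.1 : ℕ)) ki.2 j)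
    ((lam • (1 : Matrix (Fin n) (Fin n) ℂ) - A.map Complex.ofReal) ^ k)

namespace Matrix

theorem rank_fromRows_eq_rank_iff {𝕜 m₁ m₂ n : Type*} [Field 𝕜] [Fintype n]
    (M : Matrix m₁ n 𝕜) (N : Matrix m₂ n 𝕜) :
    (fromRows M N).rank = M.rank ↔ ∀ v, M *ᵥ v = 0 → N *ᵥ v = 0 := by
  have hker : LinearMap.ker (fromRows M N).mulVecLin =
      LinearMap.ker M.mulVecLin ⊓ LinearMap.ker N.mulVecLin := by
    ext v
    simp [fromRows_mulVec, ← Sum.elim_zero_zero, Sum.elim_eq_iff]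
  have hnullity : (fromRows M N).rank = M.rank ↔
      Module.finrank 𝕜 (LinearMap.ker (fromRows M N).mulVecLin) =
        Module.finrank 𝕜 (LinearMap.ker M.mulVecLin) := by
    have h₁ := LinearMap.finrank_range_add_finrank_ker (fromRows M N).mulVecLin
    have h₂ := LinearMap.finrank_range_add_finrank_ker M.mulVecLin
    rw [rank, rank]
    omega
  rw [hnullity, hker]
  constructor
  · intro h v hv
    exact inf_eq_left.mp (Submodule.eq_of_le_of_finrank_eq inf_le_left h) hv
  · intro h
    rw [inf_eq_left.mpr fun v hv => h v hv]

variable {𝕜 R ι q r : Type*} [Fintype ι] [DecidableEq ι]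

/-- With `S = λ - A`, this says `v ∈ ker D_{[A,C],k,λ}`. -/
def IsStackNull [Semiring R] (C : Matrix q ι R) (S : Matrix ι ι R) (k : ℕ) (v : ι → R) : Prop :=
  (∀ j < k, (C * S ^ j) *ᵥ v = 0) ∧ S ^ k *ᵥ v = 0

def IsObservable [Semiring R] (A : Matrix ι ι R) (C : Matrix q ι R) : Prop :=
  ∀ v, (∀ j < Fintype.card ι, (C * A ^ j) *ᵥ v = 0) → v = 0

theorem smul_one_sub_mul_eq_mul_smul_one_sub {κ : Type*} [Fintype κ] [DecidableEq κ] [CommRing R]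
    {S : Matrix ι ι R} {Q : Matrix ι κ R} {T : Matrix κ κ R} (h : S * Q = Q * T) (c : R) :
    (c • 1 - S) * Q = Q * (c • 1 - T) := by
  rw [Matrix.sub_mul, Matrix.mul_sub, h, Matrix.smul_mul, Matrix.mul_smul, Matrix.one_mul,
    Matrix.mul_one]

section Conjugation

variable {κ : Type*} [Fintype κ] [DecidableEq κ] [Semiring R] {C : Matrix q ι R}
  {S : Matrix ι ι R} {Q : Matrix ι κ R} {Q' : Matrix κ ι R} {T : Matrix κ κ R}

theorem pow_mul_eq_mul_pow_of_mul_eq_mul (h : S * Q = Q * T) (k : ℕ) :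
    S ^ k * Q = Q * T ^ k := by
  induction k with
  | zero => simp
  | succ k ih => rw [pow_succ', Matrix.mul_assoc, ih, ← Matrix.mul_assoc, h, Matrix.mul_assoc,
      ← pow_succ']

theorem isStackNull_mulVec_iff (hQ : Q' * Q = 1) (h : S * Q = Q * T) (k : ℕ) (w : κ → R) :
    IsStackNull C S k (Q *ᵥ w) ↔ IsStackNull (C * Q) T k w := by
  have hinj : Function.Injective Q.mulVec := fun x y hxy => by
    simpa [mulVec_mulVec, hQ] using congrArg (Q' *ᵥ ·) hxy
  simp only [IsStackNull, mulVec_mulVec, Matrix.mul_assoc, pow_mul_eq_mul_pow_of_mul_eq_mul h]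
  rw [← mulVec_mulVec, ← mulVec_zero Q, hinj.eq_iff]

theorem forall_isStackNull_imp_iff (hQ₁ : Q' * Q = 1) (hQ₂ : Q * Q' = 1) (h : S * Q = Q * T)
    (k : ℕ) (K : Matrix r ι R) :
    (∀ v, IsStackNull C S k v → K *ᵥ v = 0) ↔
      ∀ w, IsStackNull (C * Q) T k w → (K * Q) *ᵥ w = 0 := by
  constructor
  · intro hK w hw
    rw [← mulVec_mulVec]
    exact hK _ ((isStackNull_mulVec_iff hQ₁ h k w).2 hw)
  · intro hK v hv
    obtain ⟨w, rfl⟩ : ∃ w, Q *ᵥ w = v := ⟨Q' *ᵥ v, by rw [mulVec_mulVec, hQ₂, one_mulVec]⟩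
    rw [mulVec_mulVec]
    exact hK w ((isStackNull_mulVec_iff hQ₁ h k w).1 hv)

end Conjugation

section LowerTriangular

variable {l m : Type*} [DecidableEq l] [DecidableEq m] [Ring R]
  {X : Matrix l l R} {Y : Matrix m l R} {Z : Matrix m m R}

theorem smul_one_sub_fromBlocks_zero (c : R) :
    c • 1 - fromBlocks X 0 Y Z = fromBlocks (c • 1 - X) 0 (-Y) (c • 1 - Z) := by
  rw [← fromBlocks_one, fromBlocks_smul]
  ext (i | i) (j | j) <;> simp

variable [Fintype l] [Fintype m]

theorem fromBlocks_zero_pow_mulVec_comp_inl (k : ℕ) (w : l ⊕ m → R) :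
    (fromBlocks X 0 Y Z ^ k *ᵥ w) ∘ Sum.inl = X ^ k *ᵥ (w ∘ Sum.inl) := by
  induction k generalizing w with
  | zero => simp
  | succ k ih =>
    rw [pow_succ, ← mulVec_mulVec, ih, pow_succ, ← mulVec_mulVec, fromBlocks_mulVec]
    simp

theorem fromBlocks_zero_pow_mulVec_sumElim_zero (k : ℕ) (u : m → R) :
    fromBlocks X 0 Y Z ^ k *ᵥ Sum.elim (0 : l → R) u = Sum.elim (0 : l → R) (Z ^ k *ᵥ u) := by
  induction k with
  | zero => simp
  | succ k ih =>
    rw [pow_succ', ← mulVec_mulVec, ih, pow_succ', ← mulVec_mulVec, fromBlocks_mulVec]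
    simp

theorem IsStackNull.comp_inl {C : Matrix q l R} {k : ℕ} {w : l ⊕ m → R}
    (h : IsStackNull (fromCols C 0) (fromBlocks X 0 Y Z) k w) :
    IsStackNull C X k (w ∘ Sum.inl) := by
  refine ⟨fun j hj => ?_, ?_⟩
  · have := h.1 j hj
    rwa [← mulVec_mulVec, fromCols_mulVec, fromBlocks_zero_pow_mulVec_comp_inl, zero_mulVec,
      add_zero, mulVec_mulVec] at this
  · rw [← fromBlocks_zero_pow_mulVec_comp_inl, h.2]
    rfl

theorem isStackNull_sumElim_zero (C : Matrix q l R) {k : ℕ} {u : m → R} (h : Z ^ k *ᵥ u = 0) :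
    IsStackNull (fromCols C 0) (fromBlocks X 0 Y Z) k (Sum.elim (0 : l → R) u) := by
  refine ⟨fun j _ => ?_, ?_⟩
  · rw [← mulVec_mulVec, fromBlocks_zero_pow_mulVec_sumElim_zero, fromCols_mulVec]
    simp
  · rw [fromBlocks_zero_pow_mulVec_sumElim_zero, h, Sum.elim_zero_zero]

end LowerTriangular

theorem mul_pow_mulVec_eq_zero_of_smul_one_sub [CommRing R] {C : Matrix q ι R} {A : Matrix ι ι R}
    {c : R} {k : ℕ} {w : ι → R} (h : ∀ i < k, (C * (c • 1 - A) ^ i) *ᵥ w = 0) :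
    ∀ j < k, (C * A ^ j) *ᵥ w = 0 := by
  intro j hj
  have hA : A ^ j = Polynomial.aeval (c • 1 - A) ((Polynomial.C c - Polynomial.X) ^ j) := by
    simp [Algebra.algebraMap_eq_smul_one]
  have hdeg : ((Polynomial.C c - Polynomial.X) ^ j).natDegree ≤ j := by
    simpa using Polynomial.natDegree_pow_le_of_le (m := 1) j
      ((Polynomial.natDegree_sub_le _ _).trans (max_le (by simp) Polynomial.natDegree_X_le))
  rw [hA, Polynomial.aeval_eq_sum_range, Matrix.mul_sum, sum_mulVec]
  refine Finset.sum_eq_zero fun i hi => ?_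
  rw [Matrix.mul_smul, smul_mulVec, h i (by grind), smul_zero]

theorem eq_zero_of_smul_one_sub_pow_mulVec_eq_zero [Field 𝕜] {M : Matrix ι ι 𝕜} {c : 𝕜}
    (hc : c ∉ spectrum 𝕜 M) {k : ℕ} {u : ι → 𝕜} (h : (c • 1 - M) ^ k *ᵥ u = 0) : u = 0 := by
  have hunit : IsUnit (c • 1 - M) := by
    simpa [spectrum.notMem_iff, Algebra.algebraMap_eq_smul_one] using hc
  exact mulVec_injective_iff_isUnit.2 (hunit.pow k) (by rw [h, mulVec_zero])

theorem eq_zero_of_forall_smul_one_sub_pow_mulVec_eq_zero [Field 𝕜] [IsAlgClosed 𝕜]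
    {M : Matrix ι ι 𝕜} {N : Matrix r ι 𝕜} {k : ℕ} (hk : Fintype.card ι ≤ k)
    (h : ∀ μ ∈ spectrum 𝕜 M, ∀ u, (μ • 1 - M) ^ k *ᵥ u = 0 → N *ᵥ u = 0) : N = 0 := by
  have hgen : ∀ μ, Module.End.maxGenEigenspace (toLinAlgEquiv' M) μ ≤
      LinearMap.ker (toLin' N) := by
    intro μ u hu
    rw [Module.End.maxGenEigenspace_eq_genEigenspace_finrank, Module.End.mem_genEigenspace_nat,
      Module.finrank_fintype_fun_eq_card, LinearMap.mem_ker, ← map_one (toLinAlgEquiv' (R := 𝕜)),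
      ← map_smul, ← map_sub, ← map_pow, toLinAlgEquiv'_apply] at hu
    have hcard : (μ • 1 - M) ^ Fintype.card ι *ᵥ u = 0 := by
      rw [← neg_sub, neg_pow, ← mulVec_mulVec, hu, mulVec_zero]
    have hu' : (μ • 1 - M) ^ k *ᵥ u = 0 := by
      rw [← Nat.sub_add_cancel hk, pow_add, ← mulVec_mulVec, hcard, mulVec_zero]
    by_cases hμ : μ ∈ spectrum 𝕜 M
    · exact h μ hμ u hu'
    · simp [eq_zero_of_smul_one_sub_pow_mulVec_eq_zero hμ hu']
  have htop := Module.End.iSup_maxGenEigenspace_eq_top (toLinAlgEquiv' M)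
  have hker : LinearMap.ker (toLin' N) = ⊤ := top_le_iff.mp (htop ▸ iSup_le hgen)
  simpa using LinearMap.ker_eq_top.mp hker

section ObservableStableUnstable

variable [Field 𝕜] {ι₂ ι₃ : Type*} [Fintype ι₂] [Fintype ι₃] [DecidableEq ι₂] [DecidableEq ι₃]
  {A₁ : Matrix ι ι 𝕜} {A₂₁ : Matrix (ι₂ ⊕ ι₃) ι 𝕜} {A₂ : Matrix ι₂ ι₂ 𝕜} {A₃₂ : Matrix ι₃ ι₂ 𝕜}
  {A₃ : Matrix ι₃ ι₃ 𝕜} {C₁ : Matrix q ι 𝕜} {c : 𝕜} {k : ℕ}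

theorem IsStackNull.exists_eq_sumElim_zero_sumElim_zero (hobs : IsObservable A₁ C₁)
    (hk : Fintype.card ι ≤ k) (hc : c ∉ spectrum 𝕜 A₂) {w : ι ⊕ (ι₂ ⊕ ι₃) → 𝕜}
    (h : IsStackNull (fromCols C₁ 0) (c • 1 - fromBlocks A₁ 0 A₂₁ (fromBlocks A₂ 0 A₃₂ A₃)) k w) :
    ∃ u, w = Sum.elim (0 : ι → 𝕜) (Sum.elim (0 : ι₂ → 𝕜) u) := by
  obtain ⟨w₁, w₂, w₃, rfl⟩ : ∃ w₁ w₂ w₃, w = Sum.elim w₁ (Sum.elim w₂ w₃) :=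
    ⟨w ∘ Sum.inl, (w ∘ Sum.inr) ∘ Sum.inl, (w ∘ Sum.inr) ∘ Sum.inr, by ext (i | i | i) <;> rfl⟩
  rw [smul_one_sub_fromBlocks_zero] at h
  obtain rfl : w₁ = 0 := hobs _ fun j hj =>
    mul_pow_mulVec_eq_zero_of_smul_one_sub h.comp_inl.1 j (hj.trans_le hk)
  have h₂₃ := h.2
  rw [fromBlocks_zero_pow_mulVec_sumElim_zero, ← Sum.elim_zero_zero, Sum.elim_eq_iff,
    smul_one_sub_fromBlocks_zero] at h₂₃
  have h₂ := fromBlocks_zero_pow_mulVec_comp_inl k (Sum.elim w₂ w₃) (X := c • 1 - A₂) (Y := -A₃₂)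
    (Z := c • 1 - A₃)
  rw [h₂₃.2, Sum.elim_comp_inl] at h₂
  obtain rfl : w₂ = 0 := eq_zero_of_smul_one_sub_pow_mulVec_eq_zero hc h₂.symm
  exact ⟨w₃, rfl⟩

theorem isStackNull_sumElim_zero_sumElim_zero {u : ι₃ → 𝕜} (hu : (c • 1 - A₃) ^ k *ᵥ u = 0) :
    IsStackNull (fromCols C₁ 0) (c • 1 - fromBlocks A₁ 0 A₂₁ (fromBlocks A₂ 0 A₃₂ A₃)) k
      (Sum.elim (0 : ι → 𝕜) (Sum.elim (0 : ι₂ → 𝕜) u)) := by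
  rw [smul_one_sub_fromBlocks_zero]
  apply isStackNull_sumElim_zero
  rw [smul_one_sub_fromBlocks_zero, fromBlocks_zero_pow_mulVec_sumElim_zero, hu,
    Sum.elim_zero_zero]

end ObservableStableUnstable

section Complexification

theorem map_ofReal_mul {l m n : Type*} [Fintype m] (M : Matrix l m ℝ) (N : Matrix m n ℝ) :
    (M * N).map Complex.ofReal = M.map Complex.ofReal * N.map Complex.ofReal :=
  Matrix.map_mul (f := Complex.ofRealHom)

theorem map_ofReal_pow (M : Matrix ι ι ℝ) (k : ℕ) :
    (M ^ k).map Complex.ofReal = M.map Complex.ofReal ^ k :=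
  Matrix.map_pow M Complex.ofRealHom k

theorem map_ofReal_mulVec_eq_zero_iff {m n : Type*} [Fintype n] (M : Matrix m n ℝ) (v : n → ℂ) :
    M.map Complex.ofReal *ᵥ v = 0 ↔
      M *ᵥ (fun i => (v i).re) = 0 ∧ M *ᵥ (fun i => (v i).im) = 0 := by
  simp [funext_iff, Complex.ext_iff, mulVec, dotProduct, Complex.re_sum, Complex.im_sum,
    forall_and]

theorem IsObservable.map_ofReal {A : Matrix ι ι ℝ} {C : Matrix q ι ℝ} (hobs : IsObservable A C) :
    IsObservable (A.map Complex.ofReal) (C.map Complex.ofReal) := by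
  intro w hw
  have hreim : ∀ j < Fintype.card ι, (C * A ^ j) *ᵥ (fun i => (w i).re) = 0 ∧
      (C * A ^ j) *ᵥ (fun i => (w i).im) = 0 := fun j hj => by
    rw [← map_ofReal_mulVec_eq_zero_iff, map_ofReal_mul, map_ofReal_pow]
    exact hw j hj
  have hre := hobs _ fun j hj => (hreim j hj).1
  have him := hobs _ fun j hj => (hreim j hj).2
  funext i
  exact Complex.ext (congrFun hre i) (congrFun him i)

end Complexification

end Matrix

theorem Dstack_mulVec_eq_zero_iff {n : ℕ} {p : Type*} (k : ℕ) (A : Matrix (Fin n) (Fin n) ℝ)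
    (C : Matrix p (Fin n) ℝ) (lam : ℂ) (v : Fin n → ℂ) :
    Dstack k A C lam *ᵥ v = 0 ↔
      IsStackNull (C.map Complex.ofReal) (lam • 1 - A.map Complex.ofReal) k v := by
  rw [Dstack, fromRows_mulVec, ← Sum.elim_zero_zero, Sum.elim_eq_iff, IsStackNull]
  refine and_congr_left fun _ => ?_
  simp only [funext_iff, Prod.forall, Fin.forall_iff]
  rfl

theorem rank_fromRows_Dstack_eq_rank_iff {n : ℕ} {p r κ : Type*} [Fintype κ] [DecidableEq κ]
    {k : ℕ} (A : Matrix (Fin n) (Fin n) ℝ) (C : Matrix p (Fin n) ℝ) (K : Matrix r (Fin n) ℝ)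
    (P : Matrix (Fin n) κ ℝ) (hP₁ : Pᵀ * P = 1) (hP₂ : P * Pᵀ = 1) (lam : ℂ) :
    (fromRows (Dstack k A C lam) (K.map Complex.ofReal)).rank = (Dstack k A C lam).rank ↔
      ∀ w, IsStackNull ((C * P).map Complex.ofReal)
        (lam • 1 - (Pᵀ * A * P).map Complex.ofReal) k w →
        (K * P).map Complex.ofReal *ᵥ w = 0 := by
  have hQ₁ : (P.map Complex.ofReal)ᵀ * P.map Complex.ofReal = 1 := by
    rw [← transpose_map, ← map_ofReal_mul, hP₁,
      Matrix.map_one _ Complex.ofReal_zero Complex.ofReal_one]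
  have hQ₂ : P.map Complex.ofReal * (P.map Complex.ofReal)ᵀ = 1 := by
    rw [← transpose_map, ← map_ofReal_mul, hP₂,
      Matrix.map_one _ Complex.ofReal_zero Complex.ofReal_one]
  have hAP : A.map Complex.ofReal * P.map Complex.ofReal =
      P.map Complex.ofReal * (Pᵀ * A * P).map Complex.ofReal := by
    rw [← map_ofReal_mul, ← map_ofReal_mul, ← Matrix.mul_assoc, ← Matrix.mul_assoc, hP₂,
      Matrix.one_mul]
  simp only [rank_fromRows_eq_rank_iff, Dstack_mulVec_eq_zero_iff]
  rw [forall_isStackNull_imp_iff hQ₁ hQ₂ (smul_one_sub_mul_eq_mul_smul_one_sub hAP lam),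
    ← map_ofReal_mul, ← map_ofReal_mul]

/-- **Theorem 1, (2) ⇔ (3).** Given an orthogonal matrix `P` realizing the
observability/stability decomposition of `(A, C, K)` with diagonal blocks of sizes
`n₁, n₂, n₃`, the rank condition "for every `λ` with `Re λ ≥ 0`,
`rank [D_{[A,C],n,λ}; K] = rank D_{[A,C],n,λ}`" holds if and only if `K₃ = 0`. -/
theorem stmt_6 (n p r n₁ n₂ n₃ : ℕ) (hn : n₁ + n₂ + n₃ = n)
    (A : Matrix (Fin n) (Fin n) ℝ) (C : Matrix (Fin p) (Fin n) ℝ)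
    (K : Matrix (Fin r) (Fin n) ℝ)
    (P : Matrix (Fin n) (Fin n₁ ⊕ (Fin n₂ ⊕ Fin n₃)) ℝ)
    (hP₁ : Pᵀ * P = 1) (hP₂ : P * Pᵀ = 1)
    (A₁ : Matrix (Fin n₁) (Fin n₁) ℝ)
    (A₂₁ : Matrix (Fin n₂) (Fin n₁) ℝ) (A₃₁ : Matrix (Fin n₃) (Fin n₁) ℝ)
    (A₂ : Matrix (Fin n₂) (Fin n₂) ℝ) (A₃₂ : Matrix (Fin n₃) (Fin n₂) ℝ)
    (A₃ : Matrix (Fin n₃) (Fin n₃) ℝ)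
    (C₁ : Matrix (Fin p) (Fin n₁) ℝ)
    (K₁ : Matrix (Fin r) (Fin n₁) ℝ) (K₂ : Matrix (Fin r) (Fin n₂) ℝ)
    (K₃ : Matrix (Fin r) (Fin n₃) ℝ)
    (hA : Pᵀ * A * P =
      Matrix.fromBlocks A₁ 0 (Matrix.fromRows A₂₁ A₃₁) (Matrix.fromBlocks A₂ 0 A₃₂ A₃))
    (hC : C * P = Matrix.fromCols C₁ 0)
    (hK : K * P = Matrix.fromCols K₁ (Matrix.fromCols K₂ K₃))
    (hobs : ∀ v : Fin n₁ → ℝ, (∀ j : ℕ, j < n₁ → (C₁ * A₁ ^ j).mulVec v = 0) → v = 0)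
    (hA₂ : ∀ μ ∈ spectrum ℂ (A₂.map Complex.ofReal), μ.re < 0)
    (hA₃ : ∀ μ ∈ spectrum ℂ (A₃.map Complex.ofReal), 0 ≤ μ.re) :
    (∀ lam : ℂ, 0 ≤ lam.re →
        (Matrix.fromRows (Dstack n A C lam) (K.map Complex.ofReal)).rank =
          (Dstack n A C lam).rank) ↔ K₃ = 0 := by
  have hn₁ : Fintype.card (Fin n₁) ≤ n := by simp; omega
  have hn₃ : Fintype.card (Fin n₃) ≤ n := by simp; omega
  have hobs' : IsObservable (A₁.map Complex.ofReal) (C₁.map Complex.ofReal) :=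
    IsObservable.map_ofReal (by simpa [IsObservable] using hobs)
  simp only [rank_fromRows_Dstack_eq_rank_iff A C K P hP₁ hP₂, hA, hC, hK, fromBlocks_map,
    fromRows_map, fromCols_map, Matrix.map_zero _ Complex.ofReal_zero]
  constructor
  · intro h
    have hK₃ : K₃.map Complex.ofReal = 0 :=
      eq_zero_of_forall_smul_one_sub_pow_mulVec_eq_zero hn₃ fun μ hμ u hu => by
        simpa [fromCols_mulVec] using h μ (hA₃ μ hμ) _ (isStackNull_sumElim_zero_sumElim_zero hu)
    exact Matrix.map_injective Complex.ofReal_injective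
      (hK₃.trans (Matrix.map_zero _ Complex.ofReal_zero).symm)
  · rintro rfl lam hlam w hw
    obtain ⟨u, rfl⟩ := hw.exists_eq_sumElim_zero_sumElim_zero hobs' hn₁
      fun hmem => (hA₂ lam hmem).not_ge hlam
    simp [fromCols_mulVec]
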